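/- Define M : ℕ → ℚ by M(n) = 2·3^n·(2n)! / (n!·(n+2)!). Then M(0) = 1 and for all n ≥ 1: (n+1)·M(n) = 4(2n−1)·M(n−1) + 3·Σ_{i+j=n−2, i,j≥0} (2i+1)(2j+1)·M(i)·M(j). -/

import Mathlib

/-! With `C` the Catalan numbers, `(2n+1)·M(n) = 3^n·C(n+1)`. This turns the quadratic term into
`3^(n-2)·∑_{i+j=n-2} C(i+1)·C(j+1) = 3^(n-2)·(C(n+1) - 2·C(n))`, the Catalan convolution with its two
boundary terms removed, and the recurrence collapses to `(n+2)·C(n+1) = 2(2n+1)·C(n)`. -/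

/-- Tutte's closed formula for the number of rooted planar maps with `n` edges:
`M(n) = 2·3^n·(2n)! / (n!·(n+2)!)`. -/
def tutteM (n : ℕ) : ℚ :=
  2 * 3 ^ n * (Nat.factorial (2 * n) : ℚ) /
    ((Nat.factorial n : ℚ) * (Nat.factorial (n + 2) : ℚ))

open Finset
open scoped Nat

theorem add_two_mul_catalan_succ (n : ℕ) :
    (n + 2) * catalan (n + 1) = 2 * (2 * n + 1) * catalan n := by
  have h := Nat.succ_mul_centralBinom_succ n
  rw [← succ_mul_catalan_eq_centralBinom, ← succ_mul_catalan_eq_centralBinom] at h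
  apply Nat.eq_of_mul_eq_mul_left (by omega : 0 < n + 1)
  linear_combination h

theorem catalan_add_three (n : ℕ) :
    catalan (n + 3) =
      2 * catalan (n + 2) + ∑ p ∈ antidiagonal n, catalan (p.1 + 1) * catalan (p.2 + 1) := by
  rw [catalan_succ', Nat.sum_antidiagonal_succ, Nat.sum_antidiagonal_succ']
  simp only [catalan_zero, mul_one, one_mul]
  ring

theorem cast_catalan_eq_factorial_div {K : Type*} [Field K] [CharZero K] (n : ℕ) :
    (catalan n : K) = (2 * n)! / (n ! * (n + 1)!) := by
  have h := succ_mul_catalan_eq_centralBinom n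
  rw [Nat.centralBinom_eq_two_mul_choose] at h
  have hc := Nat.cast_choose K (show n ≤ 2 * n by omega)
  rw [show 2 * n - n = n by omega, ← h] at hc
  push_cast at hc
  rw [Nat.factorial_succ]
  push_cast
  field_simp
  linear_combination hc

theorem tutteM_eq_catalan (n : ℕ) : tutteM n = 3 ^ n * catalan (n + 1) / (2 * n + 1) := by
  rw [tutteM, cast_catalan_eq_factorial_div, show 2 * (n + 1) = 2 * n + 1 + 1 by ring]
  simp only [Nat.factorial_succ]
  push_cast
  field_simp
  ring

theorem sum_range_sum_range_ite_add_eq {M : Type*} [AddCommMonoid M] {N n : ℕ} (hn : n < N)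
    (g : ℕ → ℕ → M) :
    ∑ i ∈ range N, ∑ j ∈ range N, (if i + j = n then g i j else 0) =
      ∑ p ∈ antidiagonal n, g p.1 p.2 := by
  rw [← sum_product' (f := fun i j => if i + j = n then g i j else 0), ← sum_filter]
  congr 1
  ext ⟨i, j⟩
  simp only [mem_filter, mem_product, mem_range, HasAntidiagonal.mem_antidiagonal]
  omega

theorem sum_antidiagonal_tutteM (m : ℕ) :
    ∑ p ∈ antidiagonal m, (2 * (p.1 : ℚ) + 1) * (2 * p.2 + 1) * tutteM p.1 * tutteM p.2 =
      3 ^ m * (catalan (m + 3) - 2 * catalan (m + 2)) := by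
  have hterm : ∀ p ∈ antidiagonal m,
      (2 * (p.1 : ℚ) + 1) * (2 * p.2 + 1) * tutteM p.1 * tutteM p.2 =
        3 ^ m * (catalan (p.1 + 1) * catalan (p.2 + 1) : ℕ) := by
    rintro ⟨i, j⟩ hij
    rw [HasAntidiagonal.mem_antidiagonal] at hij
    subst hij
    rw [tutteM_eq_catalan, tutteM_eq_catalan]
    push_cast
    field_simp
    ring
  rw [sum_congr rfl hterm, ← mul_sum, ← Nat.cast_sum, catalan_add_three]
  push_cast
  ring

theorem tutte_satisfies_cc_summed :
    tutteM 0 = 1 ∧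
      ∀ n : ℕ, 1 ≤ n →
        ((n : ℚ) + 1) * tutteM n =
          4 * (2 * (n : ℚ) - 1) * tutteM (n - 1) +
            3 * ∑ i ∈ Finset.range (n + 1), ∑ j ∈ Finset.range (n + 1),
              if i + j + 2 = n then
                (2 * (i : ℚ) + 1) * (2 * (j : ℚ) + 1) * tutteM i * tutteM j
              else 0 := by
  refine ⟨by norm_num [tutteM], fun n hn => ?_⟩
  obtain _ | _ | m := n
  · omega
  · norm_num [sum_range_succ, tutteM, Nat.factorial]
  · simp only [Nat.add_right_cancel_iff]
    rw [sum_range_sum_range_ite_add_eq (by omega), sum_antidiagonal_tutteM, Nat.add_sub_cancel,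
      tutteM_eq_catalan, tutteM_eq_catalan]
    have hrec : ((m : ℚ) + 4) * catalan (m + 3) = 2 * (2 * m + 5) * catalan (m + 2) := by
      exact_mod_cast add_two_mul_catalan_succ (m + 2)
    push_cast
    field_simp
    linear_combination 3 ^ (m + 1) * (2 * (m : ℚ) + 3) * hrec
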